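/- arXiv:2208.13316 — 2 statements merged into one kernel-verified Lean document; each statement's English description precedes it below -/
import Mathlib

section
/- The parity expectation values of the hierarchical parity model satisfy the exact recursion P_{k,p} = [sinh(βJ_{k,p}) + cosh(βJ_{k,p}) P_{k-1,2p-1} P_{k-1,2p}] / [cosh(βJ_{k,p}) + sinh(βJ_{k,p}) P_{k-1,2p-1} P_{k-1,2p}], with initial condition P_{0,p} = tanh(βJ_{0,p}). -/
open Real BigOperators Finset

noncomputable section

/-- Map a Boolean spin to ±1. -/
def spin (b : Bool) : ℝ := if b then 1 else -1

/-- Embed index of left half. -/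
def finLeft {k : ℕ} (i : Fin (2^k)) : Fin (2^(k+1)) :=
  ⟨i.val, lt_of_lt_of_le i.isLt (Nat.pow_le_pow_right (by norm_num) (Nat.le_succ k))⟩

/-- Embed index of right half. -/
def finRight {k : ℕ} (i : Fin (2^k)) : Fin (2^(k+1)) :=
  ⟨2^k + i.val, by
    have h := i.isLt
    have h2 : 2^(k+1) = 2^k + 2^k := by rw [pow_succ]; ring
    omega⟩

/-- Parity (product of ±1 spins) of a configuration. -/
def parityProd {m : ℕ} (s : Fin m → Bool) : ℝ := ∏ i, spin (s i)

/-- Hamiltonian of sub-system (k,p) of the hierarchical parity model,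
as a function of its own 2^k spins. -/
def Hsub (J : ℕ → ℕ → ℝ) : (k : ℕ) → ℕ → (Fin (2^k) → Bool) → ℝ
  | 0, p, s => -(J 0 p) * spin (s ⟨0, Nat.two_pow_pos 0⟩)
  | (k+1), p, s =>
      Hsub J k (2*p-1) (fun i => s (finLeft i)) +
      Hsub J k (2*p) (fun i => s (finRight i)) -
      J (k+1) p * parityProd s

/-- Partition function of sub-system (k,p). -/
def Z (J : ℕ → ℕ → ℝ) (β : ℝ) (k p : ℕ) : ℝ :=
  ∑ s : Fin (2^k) → Bool, Real.exp (-β * Hsub J k p s)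

/-- Thermal expectation of the parity of sub-system (k,p). -/
def Pexp (J : ℕ → ℕ → ℝ) (β : ℝ) (k p : ℕ) : ℝ :=
  (∑ s : Fin (2^k) → Bool, parityProd s * Real.exp (-β * Hsub J k p s)) / Z J β k p

/-!
Every parity is `±1`, so the weight of the top coupling of `(k+1, p)` is
`exp (β J ε) = cosh (β J) + ε sinh (β J)`, where `ε` is the product of the parities of the two
halves. Summing over the two halves independently, the partition sum `Z` and the parity sum `N`
obey `Z = cosh · Z_L Z_R + sinh · N_L N_R` and `N = cosh · N_L N_R + sinh · Z_L Z_R`; dividing both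
by `Z_L Z_R` gives the recursion.
-/

lemma two_pow_succ_eq_add (k : ℕ) : 2 ^ (k + 1) = 2 ^ k + 2 ^ k := by rw [pow_succ, mul_two]

/-- The sites of sub-system `(k+1, p)` are those of `(k, 2p-1)` followed by those of `(k, 2p)`. -/
def halvesEquiv (k : ℕ) : Fin (2 ^ (k + 1)) ≃ Fin (2 ^ k) ⊕ Fin (2 ^ k) :=
  (finCongr (two_pow_succ_eq_add k)).trans finSumFinEquiv.symm

@[simp]
lemma halvesEquiv_symm_inl {k : ℕ} (i : Fin (2 ^ k)) :
    (halvesEquiv k).symm (Sum.inl i) = finLeft i := by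
  ext; simp [halvesEquiv, finLeft]

@[simp]
lemma halvesEquiv_symm_inr {k : ℕ} (i : Fin (2 ^ k)) :
    (halvesEquiv k).symm (Sum.inr i) = finRight i := by
  ext; simp [halvesEquiv, finRight, add_comm]

def splitConfig (k : ℕ) :
    (Fin (2 ^ (k + 1)) → Bool) ≃ (Fin (2 ^ k) → Bool) × (Fin (2 ^ k) → Bool) :=
  ((halvesEquiv k).arrowCongr (Equiv.refl Bool)).trans (Equiv.sumArrowEquivProdArrow _ _ _)

lemma splitConfig_apply {k : ℕ} (s : Fin (2 ^ (k + 1)) → Bool) :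
    splitConfig k s = (fun i => s (finLeft i), fun i => s (finRight i)) := by
  ext i <;> simp [splitConfig]

lemma parityProd_split {k : ℕ} (s : Fin (2 ^ (k + 1)) → Bool) :
    parityProd s = parityProd (fun i => s (finLeft i)) * parityProd (fun i => s (finRight i)) := by
  simp [parityProd, ← (halvesEquiv k).symm.prod_comp, Fintype.prod_sum_type]

lemma spin_mul_self (b : Bool) : spin b * spin b = 1 := by cases b <;> simp [spin]

lemma parityProd_mul_self {m : ℕ} (s : Fin m → Bool) : parityProd s * parityProd s = 1 := by
  simp [parityProd, ← prod_mul_distrib, spin_mul_self]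

lemma Real.exp_mul_of_mul_self_eq_one (x : ℝ) {ε : ℝ} (hε : ε * ε = 1) :
    exp (x * ε) = cosh x + ε * sinh x := by
  rcases mul_self_eq_one_iff.mp hε with rfl | rfl
  · simp [cosh_add_sinh]
  · simp [← cosh_sub_sinh, sub_eq_add_neg]

section Moments

variable (J : ℕ → ℕ → ℝ) (β : ℝ)

/-- Indexing by the power `j` lets one recursion cover both the partition sum (`j = 0`) and the
parity sum (`j = 1`). -/
def parityMoment (k p j : ℕ) : ℝ :=
  ∑ s : Fin (2 ^ k) → Bool, parityProd s ^ j * exp (-β * Hsub J k p s)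

lemma Pexp_eq_div (k p : ℕ) :
    Pexp J β k p = parityMoment J β k p 1 / parityMoment J β k p 0 := by
  simp [Pexp, Z, parityMoment]

lemma parityMoment_two (k p : ℕ) : parityMoment J β k p 2 = parityMoment J β k p 0 := by
  simp [parityMoment, sq, parityProd_mul_self]

lemma parityMoment_zero_pos (k p : ℕ) : 0 < parityMoment J β k p 0 :=
  sum_pos (fun _ _ => by simpa using exp_pos _) univ_nonempty

lemma exp_neg_mul_Hsub_succ (k p : ℕ) (s : Fin (2 ^ (k + 1)) → Bool) :
    exp (-β * Hsub J (k + 1) p s) =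
      exp (-β * Hsub J k (2 * p - 1) (fun i => s (finLeft i))) *
        exp (-β * Hsub J k (2 * p) (fun i => s (finRight i))) *
        (cosh (β * J (k + 1) p) + parityProd (fun i => s (finLeft i)) *
          parityProd (fun i => s (finRight i)) * sinh (β * J (k + 1) p)) := by
  have hε := parityProd_mul_self s
  rw [parityProd_split] at hε
  rw [← Real.exp_mul_of_mul_self_eq_one _ hε, ← exp_add, ← exp_add, Hsub, parityProd_split]
  ring_nf

lemma parityMoment_succ (k p j : ℕ) :
    parityMoment J β (k + 1) p j =
      cosh (β * J (k + 1) p) * (parityMoment J β k (2 * p - 1) j * parityMoment J β k (2 * p) j) +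
      sinh (β * J (k + 1) p) *
        (parityMoment J β k (2 * p - 1) (j + 1) * parityMoment J β k (2 * p) (j + 1)) := by
  set c := cosh (β * J (k + 1) p)
  set sh := sinh (β * J (k + 1) p)
  let w (q : ℕ) (j : ℕ) (a : Fin (2 ^ k) → Bool) := parityProd a ^ j * exp (-β * Hsub J k q a)
  calc parityMoment J β (k + 1) p j
      = ∑ ab : (Fin (2 ^ k) → Bool) × (Fin (2 ^ k) → Bool),
          (c * (w (2 * p - 1) j ab.1 * w (2 * p) j ab.2) +
            sh * (w (2 * p - 1) (j + 1) ab.1 * w (2 * p) (j + 1) ab.2)) := by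
        refine Fintype.sum_equiv (splitConfig k) _ _ fun s => ?_
        rw [splitConfig_apply, exp_neg_mul_Hsub_succ, parityProd_split]
        ring
    _ = _ := by
        simp only [Fintype.sum_prod_type, sum_add_distrib, ← mul_sum, ← sum_mul]
        rfl

end Moments

lemma sum_config_level_zero (f : (Fin (2 ^ 0) → Bool) → ℝ) :
    ∑ s, f s = f (fun _ => true) + f (fun _ => false) := by
  show ∑ s : Fin 1 → Bool, f s = _
  rw [← (Equiv.funUnique (Fin 1) Bool).symm.sum_comp, Fintype.sum_bool]
  rfl

lemma Pexp_zero (J : ℕ → ℕ → ℝ) (β : ℝ) (p : ℕ) : Pexp J β 0 p = tanh (β * J 0 p) := by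
  rw [Pexp_eq_div, parityMoment, parityMoment, sum_config_level_zero, sum_config_level_zero, tanh_eq_sinh_div_cosh]
  simp [parityProd, Hsub, spin, sinh_eq, cosh_eq, div_div_div_cancel_right₀, sub_eq_add_neg]

theorem parity_recursion_general (J : ℕ → ℕ → ℝ) (β : ℝ) :
    (∀ k p : ℕ, 1 ≤ p → Pexp J β (k+1) p =
      (Real.sinh (β * J (k+1) p) +
        Real.cosh (β * J (k+1) p) * Pexp J β k (2*p-1) * Pexp J β k (2*p)) /
      (Real.cosh (β * J (k+1) p) +
        Real.sinh (β * J (k+1) p) * Pexp J β k (2*p-1) * Pexp J β k (2*p))) ∧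
    (∀ p : ℕ, Pexp J β 0 p = Real.tanh (β * J 0 p)) := by
  refine ⟨fun k p _ => ?_, Pexp_zero J β⟩
  have hL := (parityMoment_zero_pos J β k (2 * p - 1)).ne'
  have hR := (parityMoment_zero_pos J β k (2 * p)).ne'
  rw [Pexp_eq_div, Pexp_eq_div, Pexp_eq_div, parityMoment_succ, parityMoment_succ, zero_add,
    one_add_one_eq_two, parityMoment_two, parityMoment_two, eq_comm,
    ← mul_div_mul_right _ _ (mul_ne_zero hL hR)]
  congr 1 <;> field_simp
  ring

/-- parity recursion with initial condition. -/
theorem parity_recursion (J : ℕ → ℕ → ℝ) (β : ℝ) (hβ : 0 < β) :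
    (∀ k p : ℕ, 1 ≤ p → Pexp J β (k+1) p =
      (Real.sinh (β * J (k+1) p) +
        Real.cosh (β * J (k+1) p) * Pexp J β k (2*p-1) * Pexp J β k (2*p)) /
      (Real.cosh (β * J (k+1) p) +
        Real.sinh (β * J (k+1) p) * Pexp J β k (2*p-1) * Pexp J β k (2*p))) ∧
    (∀ p : ℕ, Pexp J β 0 p = Real.tanh (β * J 0 p)) :=
  parity_recursion_general J β
end
end

section
/- The parity probability mass function satisfies the recursion ℙ_{k,p}(P) = (Z_{k-1,2p-1} Z_{k-1,2p} / Z_{k,p}) e^{βJ_{k,p}P} ∑_{P_L,P_R ∈ {-1,1}} ℙ_{k-1,2p-1}(P_L) ℙ_{k-1,2p}(P_R) 𝟙[P = P_L P_R]. -/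
open Real BigOperators Finset

noncomputable section

open Classical in
/-- Probability the parity of sub-system (k,p) equals P under the Boltzmann distribution. -/
noncomputable def Pmf (J : ℕ → ℕ → ℝ) (β : ℝ) (k p : ℕ) (P : ℝ) : ℝ :=
  (∑ s : Fin (2^k) → Bool, if parityProd s = P then Real.exp (-β * Hsub J k p s) else 0) /
    Z J β k p

def glueE (k : ℕ) : Fin (2^k) ⊕ Fin (2^k) ≃ Fin (2^(k+1)) :=
  finSumFinEquiv.trans (finCongr (by rw [pow_succ, mul_two]))

lemma glueE_inl {k : ℕ} (i : Fin (2^k)) : glueE k (Sum.inl i) = finLeft i := by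
  apply Fin.ext; simp [glueE, finLeft]

lemma glueE_inr {k : ℕ} (i : Fin (2^k)) : glueE k (Sum.inr i) = finRight i := by
  apply Fin.ext; simp [glueE, finRight]; omega

def glueF (k : ℕ) : ((Fin (2^k) → Bool) × (Fin (2^k) → Bool)) ≃ (Fin (2^(k+1)) → Bool) :=
  (Equiv.sumArrowEquivProdArrow _ _ _).symm.trans ((glueE k).arrowCongr (Equiv.refl Bool))

lemma glueF_apply {k : ℕ} (a b : Fin (2^k) → Bool) (j : Fin (2^(k+1))) :
    glueF k (a, b) j = Sum.elim a b ((glueE k).symm j) := by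
  simp [glueF, Equiv.sumArrowEquivProdArrow, Equiv.arrowCongr]

lemma glueF_left {k : ℕ} (a b : Fin (2^k) → Bool) (i : Fin (2^k)) :
    glueF k (a, b) (finLeft i) = a i := by
  rw [glueF_apply, ← glueE_inl, Equiv.symm_apply_apply]; rfl

lemma glueF_right {k : ℕ} (a b : Fin (2^k) → Bool) (i : Fin (2^k)) :
    glueF k (a, b) (finRight i) = b i := by
  rw [glueF_apply, ← glueE_inr, Equiv.symm_apply_apply]; rfl

lemma parity_glue {k : ℕ} (a b : Fin (2^k) → Bool) :
    parityProd (glueF k (a, b)) = parityProd a * parityProd b := by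
  unfold parityProd
  rw [← Equiv.prod_comp (glueE k) (fun j => spin (glueF k (a,b) j))]
  rw [Fintype.prod_sum_type]
  congr 1
  · exact Finset.prod_congr rfl fun i _ => by rw [glueE_inl, glueF_left]
  · exact Finset.prod_congr rfl fun i _ => by rw [glueE_inr, glueF_right]

lemma parity_mem {m : ℕ} (s : Fin m → Bool) : parityProd s = 1 ∨ parityProd s = -1 := by
  unfold parityProd
  refine Finset.prod_induction _ (fun x => x = 1 ∨ x = -1) ?_ (Or.inl rfl) ?_
  · rintro a b (rfl|rfl) (rfl|rfl) <;> norm_num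
  · intro i _; unfold spin; by_cases h : s i <;> simp [h]

lemma Z_pos (J : ℕ → ℕ → ℝ) (β : ℝ) (k p : ℕ) : 0 < Z J β k p :=
  Finset.sum_pos (fun _ _ => Real.exp_pos _) Finset.univ_nonempty

lemma Hsub_glue (J : ℕ → ℕ → ℝ) (k p : ℕ) (a b : Fin (2^k) → Bool) :
    Hsub J (k+1) p (glueF k (a, b)) =
      Hsub J k (2*p-1) a + Hsub J k (2*p) b -
        J (k+1) p * (parityProd a * parityProd b) := by
  show Hsub J k (2*p-1) (fun i => glueF k (a,b) (finLeft i)) + _ - _ = _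
  rw [parity_glue]
  congr 1
  congr 1
  · congr 1; funext i; rw [glueF_left]
  · congr 1; funext i; rw [glueF_right]

open Classical in
lemma key (J : ℕ → ℕ → ℝ) (β : ℝ) (k p : ℕ) (f : ℝ → ℝ) :
    ∑ PL ∈ ({-1, 1} : Finset ℝ),
      (∑ a : Fin (2^k) → Bool, if parityProd a = PL then Real.exp (-β * Hsub J k p a) else 0)
        * f PL
    = ∑ a : Fin (2^k) → Bool, Real.exp (-β * Hsub J k p a) * f (parityProd a) := by
  simp_rw [Finset.sum_mul]
  rw [Finset.sum_comm]
  refine Finset.sum_congr rfl fun a _ => ?_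
  rw [Finset.sum_pair (by norm_num : (-1:ℝ) ≠ 1)]
  rcases parity_mem a with h | h <;> rw [h] <;> norm_num


set_option maxHeartbeats 800000 in
open Classical in
/-- recursion for the parity probability mass function. -/
theorem parity_pmf_recursion (J : ℕ → ℕ → ℝ) (β : ℝ) (hβ : 0 < β) (k p : ℕ) (hp : 1 ≤ p)
    (P : ℝ) (hP : P = -1 ∨ P = 1) :
    Pmf J β (k+1) p P =
      (Z J β k (2*p-1) * Z J β k (2*p) / Z J β (k+1) p) * Real.exp (β * J (k+1) p * P) *
        ∑ PL ∈ ({-1, 1} : Finset ℝ), ∑ PR ∈ ({-1, 1} : Finset ℝ),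
          Pmf J β k (2*p-1) PL * Pmf J β k (2*p) PR * (if P = PL * PR then 1 else 0) := by
  have hZL := Z_pos J β k (2*p-1)
  have hZR := Z_pos J β k (2*p)
  have hZ := Z_pos J β (k+1) p
  set E := Real.exp (β * J (k+1) p * P) with hE
  -- rewrite RHS sum using key twice after clearing denominators
  have hsum : ∀ PL PR : ℝ,
      Pmf J β k (2*p-1) PL * Pmf J β k (2*p) PR * (if P = PL * PR then 1 else 0)
      = (1 / (Z J β k (2*p-1) * Z J β k (2*p))) *
        ((∑ a : Fin (2^k) → Bool, if parityProd a = PL then Real.exp (-β * Hsub J k (2*p-1) a) else 0) *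
         (((∑ b : Fin (2^k) → Bool, if parityProd b = PR then Real.exp (-β * Hsub J k (2*p) b) else 0) *
           (if P = PL * PR then 1 else 0)))) := by
    intro PL PR
    unfold Pmf
    field_simp
  simp_rw [hsum, ← Finset.mul_sum]
  rw [key J β k (2*p-1) (fun PL => ∑ PR ∈ ({-1,1} : Finset ℝ),
    (∑ b : Fin (2^k) → Bool, if parityProd b = PR then Real.exp (-β * Hsub J k (2*p) b) else 0) *
      (if P = PL * PR then 1 else 0))]
  have : ∀ a : Fin (2^k) → Bool,
      (∑ PR ∈ ({-1,1} : Finset ℝ),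
        (∑ b : Fin (2^k) → Bool, if parityProd b = PR then Real.exp (-β * Hsub J k (2*p) b) else 0) *
          (if P = parityProd a * PR then 1 else 0))
      = ∑ b : Fin (2^k) → Bool, Real.exp (-β * Hsub J k (2*p) b) *
          (if P = parityProd a * parityProd b then 1 else 0) := by
    intro a
    exact key J β k (2*p) (fun PR => if P = parityProd a * PR then 1 else 0)
  simp_rw [this]
  -- now handle LHS
  unfold Pmf
  rw [← Equiv.sum_comp (glueF k)
    (fun s => if parityProd s = P then Real.exp (-β * Hsub J (k+1) p s) else 0)]
  rw [Fintype.sum_prod_type]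
  have lhsnum : ∀ (a b : Fin (2^k) → Bool),
      (if parityProd (glueF k (a, b)) = P then Real.exp (-β * Hsub J (k+1) p (glueF k (a,b))) else 0)
      = E * (Real.exp (-β * Hsub J k (2*p-1) a) * (Real.exp (-β * Hsub J k (2*p) b) *
          (if P = parityProd a * parityProd b then 1 else 0))) := by
    intro a b
    rw [parity_glue, Hsub_glue]
    by_cases h : parityProd a * parityProd b = P
    · rw [if_pos h, if_pos h.symm, hE, ← h]
      rw [mul_one, ← Real.exp_add, ← Real.exp_add]
      ring_nf
    · rw [if_neg h, if_neg (fun hh => h hh.symm)]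
      simp
  simp_rw [lhsnum, ← Finset.mul_sum]
  field_simp
end
end
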